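/- Let N = N(Q_n, m, r) be a quasi Q_n-filiform Lie algebra. Then the derivation algebra Der N is a solvable Lie algebra. -/

import Mathlib

open Finset

/-- A quasi `Qₙ`-filiform Lie algebra `N = N(Qₙ, m, r)`: a finite-dimensional complex
nilpotent Lie algebra which is the sum of `m` pairwise commuting subalgebras, each
isomorphic to the filiform Lie algebra `Qₙ` with basis `e i 0, …, e i n` satisfying the
`Qₙ` bracket relations, and such that
`{e 1 0, …, e 1 (n-1), …, e m 0, …, e m (n-1), e 1 n, …, e r n}` is a basis of `N`,
where `r = dim c^{n-1} N`. -/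
structure QuasiQnFiliform (n m r : ℕ) (N : Type*) [LieRing N] [LieAlgebra ℂ N] : Type _ where
  /-- the distinguished vectors `e_{ij}`, for `1 ≤ i ≤ m`, `0 ≤ j ≤ n` -/
  e : ℕ → ℕ → N
  /-- `N` is nilpotent -/
  nilpotent : LieModule.IsNilpotent N N
  /-- `N` is finite-dimensional -/
  findim : FiniteDimensional ℂ N
  /-- `[e_{i0}, e_{ij}] = e_{i,j+1}` for `1 ≤ j ≤ n - 2` -/
  bracket_e0 : ∀ i j, 1 ≤ i → i ≤ m → 1 ≤ j → j ≤ n - 2 → ⁅e i 0, e i j⁆ = e i (j + 1)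
  /-- `[e_{i0}, e_{i,n-1}] = 0` -/
  bracket_e0_top : ∀ i, 1 ≤ i → i ≤ m → ⁅e i 0, e i (n - 1)⁆ = 0
  /-- `[e_{i0}, e_{in}] = 0` -/
  bracket_e0_n : ∀ i, 1 ≤ i → i ≤ m → ⁅e i 0, e i n⁆ = 0
  /-- `[e_{ij}, e_{i,n-j}] = (-1)^j e_{in}` for `1 ≤ j ≤ n - 1` -/
  bracket_pair : ∀ i j, 1 ≤ i → i ≤ m → 1 ≤ j → j ≤ n - 1 →
    ⁅e i j, e i (n - j)⁆ = ((-1 : ℂ)) ^ j • e i n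
  /-- all remaining brackets inside a component vanish -/
  bracket_zero : ∀ i j k, 1 ≤ i → i ≤ m → 1 ≤ j → j ≤ n → 1 ≤ k → k ≤ n → j + k ≠ n →
    ⁅e i j, e i k⁆ = 0
  /-- distinct components commute: `[N_i, N_{i'}] = 0` -/
  bracket_comm : ∀ i i' j j', 1 ≤ i → i ≤ m → 1 ≤ i' → i' ≤ m → i ≠ i' → j ≤ n → j' ≤ n →
    ⁅e i j, e i' j'⁆ = 0
  /-- `{e_{i0}, …, e_{in}}` is linearly independent (each `Nᵢ ≅ Qₙ` has it as a basis) -/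
  indep_comp : ∀ i, 1 ≤ i → i ≤ m → LinearIndependent ℂ (fun j : Fin (n + 1) => e i (j : ℕ))
  /-- the distinguished family is linearly independent … -/
  basis_indep : LinearIndependent ℂ
    (Sum.elim (fun p : Fin m × Fin n => e ((p.1 : ℕ) + 1) (p.2 : ℕ))
      (fun t : Fin r => e ((t : ℕ) + 1) n))
  /-- … and spans `N`, i.e. it is a basis of `N` (in particular `N = N₁ + ⋯ + N_m`) -/
  basis_span : Submodule.span ℂ (Set.range
    (Sum.elim (fun p : Fin m × Fin n => e ((p.1 : ℕ) + 1) (p.2 : ℕ))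
      (fun t : Fin r => e ((t : ℕ) + 1) n))) = ⊤
  /-- `r = dim c^{n-1} N` -/
  rank_lcs : Module.finrank ℂ (LieModule.lowerCentralSeries ℂ N N (n - 1)) = r

/-!
Grade the vectors `e_{ik}` (`0 ≤ k ≤ n`) by their level `k`. Every derivation `D` of `N` is
triangular for this grading: `D e_{ik} ≡ λ e_{ik}` modulo the span of the vectors of level `> k`.
For `k = 0, 1` this is read off single coordinates of the Leibniz rule applied to the vanishing
brackets `[e_{i0}, e_{j,n-2}]`, `[e_{i1}, e_{j2}]` and `[e_{j0}, e_{i1}]` (`j ≠ i`); the higher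
levels follow from `e_{i,k+1} = [e_{i0}, e_{ik}]` and `e_{in} = -[e_{i1}, e_{i,n-1}]`, since
`[e_{ij}, e_{ik}]` only involves `e_{in}` when `j, k ≥ 1`. A commutator of two triangular maps
raises the level, so the `(k+1)`-st derived algebra of `Der N` raises it by `k + 1` and vanishes
once `k ≥ n`.
-/

open Submodule

section Triangular

variable {R M ι : Type*} [CommRing R] [AddCommGroup M] [Module R M]

variable (R) in
def Submodule.levelSpan (v : ι → M) (ℓ : ι → ℕ) (s : ℕ) : Submodule R M :=
  span R (v '' {i | s ≤ ℓ i})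

variable {v : ι → M} {ℓ : ι → ℕ}

theorem Submodule.levelSpan_antitone : Antitone (levelSpan R v ℓ) :=
  fun _ _ h => span_mono (Set.image_mono fun _ hi => le_trans h hi)

theorem Submodule.mem_levelSpan_of_le {i : ι} {s : ℕ} (h : s ≤ ℓ i) :
    v i ∈ levelSpan R v ℓ s :=
  subset_span ⟨i, h, rfl⟩

def Module.End.IsTriangular (v : ι → M) (ℓ : ι → ℕ) (f : Module.End R M) : Prop :=
  ∀ i, ∃ c : R, f (v i) - c • v i ∈ levelSpan R v ℓ (ℓ i + 1)

theorem Module.End.commutator_apply_mem_of_sub_smul_mem {f g : Module.End R M}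
    {U : Submodule R M} (hfU : ∀ x ∈ U, f x ∈ U) (hgU : ∀ x ∈ U, g x ∈ U) {x : M} {a b : R}
    (hf : f x - a • x ∈ U) (hg : g x - b • x ∈ U) : f (g x) - g (f x) ∈ U := by
  have key : f (g x) - g (f x) =
      f (g x - b • x) - g (f x - a • x) + b • (f x - a • x) - a • (g x - b • x) := by
    simp only [map_sub, map_smul]; module
  rw [key]
  exact sub_mem (add_mem (sub_mem (hfU _ hg) (hgU _ hf)) (smul_mem _ _ hf)) (smul_mem _ _ hg)

namespace Module.End.IsTriangular

variable {f g : Module.End R M}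

theorem apply_mem (hf : IsTriangular v ℓ f) {s : ℕ} {x : M} (hx : x ∈ levelSpan R v ℓ s) :
    f x ∈ levelSpan R v ℓ s := by
  induction hx using span_induction with
  | mem _ hx =>
    obtain ⟨i, hi, rfl⟩ := hx
    obtain ⟨c, hc⟩ := hf i
    rw [← sub_add_cancel (f (v i)) (c • v i)]
    exact add_mem (levelSpan_antitone (Nat.le_succ_of_le hi) hc)
      (smul_mem _ c (mem_levelSpan_of_le hi))
  | zero => simp
  | add x y _ _ hx hy => simpa using add_mem hx hy
  | smul c x _ hx => simpa using smul_mem _ c hx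

theorem commutator_apply_mem (hf : IsTriangular v ℓ f) (hg : IsTriangular v ℓ g) {s : ℕ}
    {x : M} (hx : x ∈ levelSpan R v ℓ s) : f (g x) - g (f x) ∈ levelSpan R v ℓ (s + 1) := by
  induction hx using span_induction with
  | mem _ hx =>
    obtain ⟨i, hi, rfl⟩ := hx
    obtain ⟨a, ha⟩ := hf i
    obtain ⟨b, hb⟩ := hg i
    exact levelSpan_antitone (Nat.succ_le_succ hi)
      (commutator_apply_mem_of_sub_smul_mem (fun _ => hf.apply_mem) (fun _ => hg.apply_mem) ha hb)
  | zero => simp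
  | add x y _ _ hx hy => convert add_mem hx hy using 1; simp only [map_add]; abel
  | smul c x _ hx => convert smul_mem _ c hx using 1; simp only [map_smul, smul_sub]

end Module.End.IsTriangular

end Triangular

theorem LieAlgebra.mem_span_of_mem_derivedSeries_succ {R L : Type*} [CommRing R] [LieRing L]
    [LieAlgebra R L] {j : ℕ} {x : L} (hx : x ∈ derivedSeries R L (j + 1)) :
    x ∈ span R {y | ∃ a ∈ derivedSeries R L j, ∃ b ∈ derivedSeries R L j, ⁅a, b⁆ = y} := by
  rwa [derivedSeries_def, derivedSeriesOfIdeal_succ, ← LieSubmodule.mem_toSubmodule,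
    LieSubmodule.lieIdeal_oper_eq_linear_span'] at hx

namespace LieDerivation

variable {R A : Type*} [CommRing R] [LieRing A] [LieAlgebra R A]

theorem apply_lie_sub_smul (D : LieDerivation R A A) (x y : A) (a b : R) :
    D ⁅x, y⁆ - (a + b) • ⁅x, y⁆ = ⁅D x - a • x, y⁆ + ⁅x, D y - b • y⁆ := by
  rw [D.apply_lie_eq_add]
  simp only [sub_lie, lie_sub, smul_lie, lie_smul]
  module

def filtrationShift (F : ℕ → Submodule R A) (j : ℕ) : Submodule R (LieDerivation R A A) where
  carrier := {D | ∀ s, ∀ x ∈ F s, D x ∈ F (s + j)}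
  add_mem' hD hE s x hx := add_mem (hD s x hx) (hE s x hx)
  zero_mem' s _ _ := zero_mem (F (s + j))
  smul_mem' c _ hD s x hx := smul_mem _ c (hD s x hx)

variable {F : ℕ → Submodule R A}

theorem lie_mem_filtrationShift {a b : ℕ} {D E : LieDerivation R A A}
    (hD : D ∈ filtrationShift F a) (hE : E ∈ filtrationShift F b) :
    ⁅D, E⁆ ∈ filtrationShift F (a + b) := by
  intro s x hx
  rw [commutator_apply]
  refine sub_mem ?_ ?_
  · simpa only [add_comm b, add_assoc] using hD _ _ (hE s x hx)
  · simpa only [add_assoc] using hE _ _ (hD s x hx)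

theorem mem_filtrationShift_one_of_mem_derivedSeries
    (h : ∀ D E : LieDerivation R A A, ⁅D, E⁆ ∈ filtrationShift F 1) {j : ℕ}
    {D : LieDerivation R A A}
    (hD : D ∈ LieAlgebra.derivedSeries R (LieDerivation R A A) (j + 1)) :
    D ∈ filtrationShift F 1 := by
  refine span_le.mpr ?_ (LieAlgebra.mem_span_of_mem_derivedSeries_succ hD)
  rintro _ ⟨D, -, E, -, rfl⟩
  exact h D E

theorem mem_filtrationShift_of_mem_derivedSeries
    (h : ∀ D E : LieDerivation R A A, ⁅D, E⁆ ∈ filtrationShift F 1) {j : ℕ}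
    {D : LieDerivation R A A}
    (hD : D ∈ LieAlgebra.derivedSeries R (LieDerivation R A A) (j + 1)) :
    D ∈ filtrationShift F (j + 1) := by
  induction j generalizing D with
  | zero => exact mem_filtrationShift_one_of_mem_derivedSeries h hD
  | succ j ih =>
    refine span_le.mpr ?_ (LieAlgebra.mem_span_of_mem_derivedSeries_succ hD)
    rintro _ ⟨D, hD, E, hE, rfl⟩
    exact lie_mem_filtrationShift (ih hD) (mem_filtrationShift_one_of_mem_derivedSeries h hE)

theorem isSolvable_of_lie_mem_filtrationShift_one
    (h : ∀ D E : LieDerivation R A A, ⁅D, E⁆ ∈ filtrationShift F 1) (h0 : F 0 = ⊤) {k : ℕ}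
    (hk : F (k + 1) = ⊥) :
    LieAlgebra.IsSolvable (LieDerivation R A A) := by
  refine LieAlgebra.IsSolvable.mk (R := R) (k := k + 1) (eq_bot_iff.mpr fun D hD => ?_)
  have hD' := mem_filtrationShift_of_mem_derivedSeries h hD
  rw [LieSubmodule.mem_bot]
  ext x
  simpa [hk] using hD' 0 x (h0 ▸ mem_top)

theorem isSolvable_of_isTriangular {ι : Type*} [Finite ι] {v : ι → A} (ℓ : ι → ℕ)
    (hv : span R (Set.range v) = ⊤)
    (h : ∀ D : LieDerivation R A A, Module.End.IsTriangular v ℓ (D : Module.End R A)) :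
    LieAlgebra.IsSolvable (LieDerivation R A A) := by
  obtain ⟨k, hk⟩ := (Set.finite_range ℓ).bddAbove
  refine isSolvable_of_lie_mem_filtrationShift_one (F := levelSpan R v ℓ)
    (fun D E s x hx => ?_) (by simpa [levelSpan] using hv) (k := k) ?_
  · rw [commutator_apply]
    exact (h D).commutator_apply_mem (h E) hx
  · rw [levelSpan, span_eq_bot]
    rintro _ ⟨i, hi, rfl⟩
    exact absurd (hk ⟨i, rfl⟩) (by simpa using hi)

end LieDerivation

theorem Submodule.lie_mem_of_mem_span {R L M : Type*} [CommRing R] [LieRing L] [LieAlgebra R L]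
    [AddCommGroup M] [Module R M] [LieRingModule L M] [LieModule R L M] {s : Set L} {t : Set M}
    {P : Submodule R M} (h : ∀ x ∈ s, ∀ y ∈ t, ⁅x, y⁆ ∈ P) {x : L} {y : M}
    (hx : x ∈ span R s) (hy : y ∈ span R t) : ⁅x, y⁆ ∈ P := by
  induction hx, hy using span_induction₂ with
  | mem_mem x y hx hy => exact h x hx y hy
  | zero_left y _ => simp
  | zero_right x _ => simp
  | add_left x y z _ _ _ hx hy => simpa using add_mem hx hy
  | add_right x y z _ _ _ hx hy => simpa using add_mem hx hy
  | smul_left c x y _ _ hxy => simpa using smul_mem _ c hxy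
  | smul_right c x y _ _ hxy => simpa using smul_mem _ c hxy

theorem LieModule.lie_mem_lowerCentralSeries_succ {R L M : Type*} [CommRing R] [LieRing L]
    [LieAlgebra R L] [AddCommGroup M] [Module R M] [LieRingModule L M] (x : L) {y : M} {k : ℕ}
    (hy : y ∈ lowerCentralSeries R L M k) : ⁅x, y⁆ ∈ lowerCentralSeries R L M (k + 1) := by
  rw [lowerCentralSeries_succ]
  exact LieSubmodule.lie_mem_lie (LieSubmodule.mem_top x) hy

namespace QuasiQnFiliform

variable {n m r : ℕ} {N : Type*} [LieRing N] [LieAlgebra ℂ N] (Q : QuasiQnFiliform n m r N)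

def gen (a : Fin m) (k : ℕ) : N := Q.e (a + 1) k

theorem lie_gen_zero_gen (a : Fin m) {k : ℕ} (hk : k ≤ n) :
    ⁅Q.gen a 0, Q.gen a k⁆ = if 1 ≤ k ∧ k + 2 ≤ n then Q.gen a (k + 1) else 0 := by
  have ha : 1 ≤ (a : ℕ) + 1 ∧ (a : ℕ) + 1 ≤ m := ⟨by omega, a.isLt⟩
  split_ifs with h
  · exact Q.bracket_e0 _ _ ha.1 ha.2 h.1 (by omega)
  · obtain rfl | rfl | rfl : k = 0 ∨ k = n - 1 ∨ k = n := by omega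
    exacts [lie_self _, Q.bracket_e0_top _ ha.1 ha.2, Q.bracket_e0_n _ ha.1 ha.2]

theorem lie_gen_gen_of_pos (a : Fin m) {j k : ℕ} (hj : 1 ≤ j) (hjn : j ≤ n) (hk : 1 ≤ k)
    (hkn : k ≤ n) :
    ⁅Q.gen a j, Q.gen a k⁆ = if j + k = n then (-1 : ℂ) ^ j • Q.gen a n else 0 := by
  have ha : 1 ≤ (a : ℕ) + 1 ∧ (a : ℕ) + 1 ≤ m := ⟨by omega, a.isLt⟩
  split_ifs with h
  · obtain rfl : k = n - j := by omega
    exact Q.bracket_pair _ _ ha.1 ha.2 hj (by omega)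
  · exact Q.bracket_zero _ _ _ ha.1 ha.2 hj hjn hk hkn h

theorem lie_gen_gen_of_ne {a b : Fin m} (hab : a ≠ b) {j k : ℕ} (hj : j ≤ n) (hk : k ≤ n) :
    ⁅Q.gen a j, Q.gen b k⁆ = 0 :=
  Q.bracket_comm _ _ _ _ (by omega) a.isLt (by omega) b.isLt (by omega) hj hk

theorem lie_gen_gen (a b : Fin m) {j k : ℕ} (hj : j ≤ n) (hk : k ≤ n) :
    ⁅Q.gen a j, Q.gen b k⁆ = if a = b then
      ((if j = 0 ∧ 1 ≤ k ∧ k + 2 ≤ n then Q.gen a (k + 1) else 0) -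
        (if k = 0 ∧ 1 ≤ j ∧ j + 2 ≤ n then Q.gen a (j + 1) else 0) +
        (if 1 ≤ j ∧ 1 ≤ k ∧ j + k = n then (-1 : ℂ) ^ j • Q.gen a n else 0)) else 0 := by
  by_cases hab : a = b
  swap
  · rw [if_neg hab]
    exact Q.lie_gen_gen_of_ne hab hj hk
  subst hab
  rw [if_pos rfl]
  rcases Nat.eq_zero_or_pos j with rfl | hj0
  · rw [Q.lie_gen_zero_gen a hk]
    simp
  rcases Nat.eq_zero_or_pos k with rfl | hk0
  · rw [← lie_skew, Q.lie_gen_zero_gen a hj]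
    simp [hj0.ne', Nat.one_le_iff_ne_zero]
  · rw [Q.lie_gen_gen_of_pos a hj0 hj hk0 hk]
    simp [hj0.ne', hk0.ne', Nat.one_le_iff_ne_zero]

theorem span_range_gen (hrm : r ≤ m) :
    span ℂ (Set.range fun i : Fin m × Fin (n + 1) => Q.gen i.1 i.2) = ⊤ := by
  refine eq_top_iff.mpr (Q.basis_span.ge.trans (span_mono ?_))
  rintro _ ⟨⟨a, k⟩ | t, rfl⟩
  exacts [⟨(a, k.castSucc), rfl⟩, ⟨(Fin.castLE hrm t, Fin.last n), rfl⟩]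

def filtration : ℕ → Submodule ℂ N :=
  levelSpan ℂ (fun i : Fin m × Fin (n + 1) => Q.gen i.1 i.2) (fun i => i.2)

theorem filtration_antitone : Antitone Q.filtration :=
  levelSpan_antitone

theorem gen_mem_filtration (a : Fin m) {s k : ℕ} (hs : s ≤ k) (hk : k ≤ n) :
    Q.gen a k ∈ Q.filtration s :=
  mem_levelSpan_of_le (i := ((a, ⟨k, by omega⟩) : Fin m × Fin (n + 1))) hs

theorem lie_mem_filtration_succ (hrm : r ≤ m) (x : N) {y : N} {s : ℕ}
    (hy : y ∈ Q.filtration s) : ⁅x, y⁆ ∈ Q.filtration (s + 1) := by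
  refine lie_mem_of_mem_span ?_ (Q.span_range_gen hrm ▸ mem_top : x ∈ _) hy
  rintro _ ⟨⟨a, j⟩, rfl⟩ _ ⟨⟨b, k⟩, hk : s ≤ k, rfl⟩
  rw [Q.lie_gen_gen a b j.is_le k.is_le]
  split_ifs <;> first
    | exact zero_mem _
    | refine add_mem (sub_mem ?_ ?_) ?_ <;> first
      | exact zero_mem _
      | exact smul_mem _ _ (Q.gen_mem_filtration _ (by omega) (by omega))
      | exact Q.gen_mem_filtration _ (by omega) (by omega)

theorem lie_mem_filtration_max {x y : N} {s t : ℕ} (hs : 1 ≤ s) (ht : 1 ≤ t)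
    (hx : x ∈ Q.filtration s) (hy : y ∈ Q.filtration t) :
    ⁅x, y⁆ ∈ Q.filtration (max n (s + t)) := by
  refine lie_mem_of_mem_span ?_ hx hy
  rintro _ ⟨⟨a, j⟩, hj : s ≤ j, rfl⟩ _ ⟨⟨b, k⟩, hk : t ≤ k, rfl⟩
  rw [Q.lie_gen_gen a b j.is_le k.is_le]
  split_ifs <;> first
    | exact zero_mem _
    | refine add_mem (sub_mem ?_ ?_) ?_ <;> first
      | exact zero_mem _
      | exact smul_mem _ _ (Q.gen_mem_filtration _ (by omega) (by omega))
      | exact Q.gen_mem_filtration _ (by omega) (by omega)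

noncomputable def basis : Module.Basis ((Fin m × Fin n) ⊕ Fin r) ℂ N :=
  .mk Q.basis_indep Q.basis_span.ge

theorem basis_inl (a : Fin m) (k : Fin n) : Q.basis (.inl (a, k)) = Q.gen a k :=
  Module.Basis.mk_apply _ _ _

theorem basis_inr (hrm : r ≤ m) (t : Fin r) : Q.basis (.inr t) = Q.gen (Fin.castLE hrm t) n :=
  Module.Basis.mk_apply _ _ _

theorem gen_mem_lowerCentralSeries (a : Fin m) {k : ℕ} (hk : 1 ≤ k) (hkn : k + 1 ≤ n) :
    Q.gen a k ∈ LieModule.lowerCentralSeries ℂ N N (k - 1) := by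
  induction k, hk using Nat.le_induction with
  | base => exact LieSubmodule.mem_top _
  | succ k hk ih =>
    have h := LieModule.lie_mem_lowerCentralSeries_succ (Q.gen a 0) (ih (by omega))
    rwa [Q.lie_gen_zero_gen a (by omega), if_pos ⟨hk, by omega⟩,
      show k - 1 + 1 = k + 1 - 1 by omega] at h

theorem gen_top_mem_lowerCentralSeries (hn : 2 ≤ n) (a : Fin m) :
    Q.gen a n ∈ LieModule.lowerCentralSeries ℂ N N (n - 1) := by
  have h := LieModule.lie_mem_lowerCentralSeries_succ (Q.gen a 1)
    (Q.gen_mem_lowerCentralSeries a (k := n - 1) (by omega) (by omega))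
  rw [Q.lie_gen_gen_of_pos a le_rfl (by omega) (by omega) (by omega), if_pos (by omega),
    show n - 1 - 1 + 1 = n - 1 by omega, pow_one, neg_one_smul] at h
  simpa using neg_mem h

/-- `c^{n-1} N` has dimension `r` and contains the independent vectors `e_{in}`, `i ≤ r`, so they
span it. -/
theorem gen_top_mem_span_basis_inr (hrm : r ≤ m) (hn : 2 ≤ n) (a : Fin m) :
    Q.gen a n ∈ span ℂ (Q.basis '' Set.range Sum.inr) := by
  have := Q.findim
  have hle : span ℂ (Q.basis '' Set.range Sum.inr) ≤
      (LieModule.lowerCentralSeries ℂ N N (n - 1) : Submodule ℂ N) := by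
    rw [span_le]
    rintro _ ⟨_, ⟨t, rfl⟩, rfl⟩
    rw [Q.basis_inr hrm]
    exact Q.gen_top_mem_lowerCentralSeries hn _
  have hrank : Module.finrank ℂ (span ℂ (Q.basis '' Set.range Sum.inr)) = r := by
    rw [← Set.range_comp,
      finrank_span_eq_card (Q.basis.linearIndependent.comp _ Sum.inr_injective), Fintype.card_fin]
  rw [Submodule.eq_of_le_of_finrank_le hle (by rw [hrank]; exact Q.rank_lcs.le)]
  exact Q.gen_top_mem_lowerCentralSeries hn a

/-- The coordinate along `e_{a+1, j}` in `Q.basis`; zero for `j ≥ n`, where `e_{a+1, j}` is not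
a basis vector. -/
noncomputable def coord (a : Fin m) (j : ℕ) : N →ₗ[ℂ] ℂ :=
  if h : j < n then Q.basis.coord (.inl (a, ⟨j, h⟩)) else 0

theorem coord_gen (hrm : r ≤ m) (hn : 2 ≤ n) (b a : Fin m) (j : ℕ) {k : ℕ} (hk : k ≤ n) :
    Q.coord b j (Q.gen a k) = if b = a ∧ j = k ∧ k < n then 1 else 0 := by
  unfold coord
  split_ifs with hj h h
  · obtain ⟨rfl, rfl, -⟩ := h
    rw [Module.Basis.coord_apply, ← Q.basis_inl b ⟨j, hj⟩, Module.Basis.repr_self,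
      Finsupp.single_eq_same]
  · rw [Module.Basis.coord_apply]
    rcases hk.lt_or_eq with hk | rfl
    · rw [← Q.basis_inl a ⟨k, hk⟩, Module.Basis.repr_self, Finsupp.single_apply, if_neg]
      rintro ⟨⟩
      exact h ⟨rfl, rfl, hk⟩
    · have := (Q.basis.mem_span_image.mp (Q.gen_top_mem_span_basis_inr hrm hn a))
      exact Finsupp.notMem_support_iff.mp fun hmem => by simpa using this hmem
  · omega
  · rfl

theorem mem_filtration_of_coord (hrm : r ≤ m) {s : ℕ} (hs : s ≤ n) {x : N}
    (h : ∀ b, ∀ j < s, Q.coord b j x = 0) : x ∈ Q.filtration s := by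
  rw [← Q.basis.sum_repr x]
  refine sum_mem fun i _ => ?_
  rcases i with ⟨b, j⟩ | t
  · by_cases hj : s ≤ j
    · rw [Q.basis_inl]
      exact smul_mem _ _ (Q.gen_mem_filtration b hj j.is_lt.le)
    · have := h b j (by omega)
      simp only [coord, j.is_lt, dite_true, Module.Basis.coord_apply] at this
      simp [this]
  · rw [Q.basis_inr hrm]
    exact smul_mem _ _ (Q.gen_mem_filtration _ hs le_rfl)

theorem ext_gen (hrm : r ≤ m) {f g : N →ₗ[ℂ] ℂ}
    (h : ∀ a k, k ≤ n → f (Q.gen a k) = g (Q.gen a k)) : f = g :=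
  LinearMap.ext_on_range (Q.span_range_gen hrm) fun i => h i.1 i.2 i.2.is_le

theorem coord_lie_gen_gen (hrm : r ≤ m) (hn : 2 ≤ n) (b a c : Fin m) (k : ℕ) {j l : ℕ}
    (hj : j ≤ n) (hl : l ≤ n) :
    Q.coord b k ⁅Q.gen a j, Q.gen c l⁆ = if b = a ∧ a = c ∧ k < n then
      (if j = 0 ∧ 1 ≤ l ∧ k = l + 1 then 1 else 0) -
        (if l = 0 ∧ 1 ≤ j ∧ k = j + 1 then 1 else 0) else 0 := by
  rw [Q.lie_gen_gen a c hj hl]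
  split_ifs <;> simp (disch := omega) [Q.coord_gen hrm hn] <;> omega

theorem coord_succ_lie_gen (hrm : r ≤ m) (b : Fin m) {k : ℕ} (hk : 1 ≤ k) (hkn : k + 2 ≤ n)
    (x : N) : Q.coord b (k + 1) ⁅x, Q.gen b k⁆ = Q.coord b 0 x := by
  refine LinearMap.congr_fun (Q.ext_gen hrm (f := Q.coord b (k + 1) ∘ₗ
    (LieModule.toEnd ℂ N N : N →ₗ[ℂ] Module.End ℂ N).flip (Q.gen b k)) fun a j hj => ?_) x
  simp only [LinearMap.comp_apply, LinearMap.flip_apply, LieHom.coe_toLinearMap,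
    LieModule.toEnd_apply_apply]
  rw [Q.coord_lie_gen_gen hrm (by omega) b a b _ hj (by omega),
    Q.coord_gen hrm (by omega) b a 0 hj]
  rcases eq_or_ne b a with rfl | hba
  · split_ifs <;> first | omega | norm_num
  · simp [hba]

theorem coord_succ_gen_zero_lie (hrm : r ≤ m) (b : Fin m) {k : ℕ} (hk : 1 ≤ k) (hkn : k + 2 ≤ n)
    (y : N) : Q.coord b (k + 1) ⁅Q.gen b 0, y⁆ = Q.coord b k y := by
  refine LinearMap.congr_fun (Q.ext_gen hrm (f := Q.coord b (k + 1) ∘ₗ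
    LieModule.toEnd ℂ N N (Q.gen b 0)) fun a j hj => ?_) y
  simp only [LinearMap.comp_apply, LieModule.toEnd_apply_apply]
  rw [Q.coord_lie_gen_gen hrm (by omega) b b a _ (by omega) hj,
    Q.coord_gen hrm (by omega) b a k hj]
  rcases eq_or_ne b a with rfl | hba
  · split_ifs <;> first | omega | norm_num
  · simp [hba]

theorem coord_gen_lie_eq_zero (hrm : r ≤ m) (hn : 2 ≤ n) {b a : Fin m} {j k : ℕ} (hj : j ≤ n)
    (h : b ≠ a ∨ 1 ≤ j ∧ k ≠ j + 1) (y : N) : Q.coord b k ⁅Q.gen a j, y⁆ = 0 := by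
  refine LinearMap.congr_fun (Q.ext_gen hrm (f := Q.coord b k ∘ₗ
    LieModule.toEnd ℂ N N (Q.gen a j)) (g := 0) fun c l hl => ?_) y
  simp only [LinearMap.comp_apply, LieModule.toEnd_apply_apply, LinearMap.zero_apply]
  rw [Q.coord_lie_gen_gen hrm hn b a c k hj hl]
  rcases eq_or_ne b a with rfl | hba
  · split_ifs <;> first | omega | norm_num
  · simp [hba]

section Derivation

variable (hrm : r ≤ m) (hn : 4 ≤ n) (D : LieDerivation ℂ N N)
include hrm hn

theorem coord_zero_derivation_gen_zero_of_ne {a b : Fin m} (hba : b ≠ a) :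
    Q.coord b 0 (D (Q.gen a 0)) = 0 := by
  have h := D.apply_lie_eq_add (Q.gen a 0) (Q.gen b (n - 2))
  rw [Q.lie_gen_gen_of_ne hba.symm (by omega) (by omega), map_zero] at h
  have h' := congrArg (Q.coord b (n - 2 + 1)) h
  rwa [map_zero, map_add, Q.coord_gen_lie_eq_zero hrm (by omega) (by omega) (Or.inl hba),
    Q.coord_succ_lie_gen hrm b (by omega) (by omega), zero_add, eq_comm] at h'

theorem coord_zero_derivation_gen_one (a b : Fin m) : Q.coord b 0 (D (Q.gen a 1)) = 0 := by
  have hrel : ⁅Q.gen a 1, Q.gen b 2⁆ = 0 := by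
    rw [Q.lie_gen_gen a b (by omega) (by omega)]
    simp
    omega
  have h := D.apply_lie_eq_add (Q.gen a 1) (Q.gen b 2)
  rw [hrel, map_zero] at h
  have h' := congrArg (Q.coord b (2 + 1)) h
  rwa [map_zero, map_add,
    Q.coord_gen_lie_eq_zero hrm (by omega) (by omega) (Or.inr ⟨le_rfl, by omega⟩),
    Q.coord_succ_lie_gen hrm b (by omega) (by omega), zero_add, eq_comm] at h'

theorem coord_one_derivation_gen_one_of_ne {a b : Fin m} (hba : b ≠ a) :
    Q.coord b 1 (D (Q.gen a 1)) = 0 := by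
  have h := D.apply_lie_eq_add (Q.gen b 0) (Q.gen a 1)
  rw [Q.lie_gen_gen_of_ne hba (by omega) (by omega), map_zero, ← lie_skew (D (Q.gen b 0))] at h
  have h' := congrArg (Q.coord b (1 + 1)) h
  rwa [map_zero, map_add, map_neg,
    Q.coord_gen_lie_eq_zero hrm (by omega) (by omega) (Or.inl hba), neg_zero,
    Q.coord_succ_gen_zero_lie hrm b le_rfl (by omega), add_zero, eq_comm] at h'

theorem derivation_gen_zero_sub_smul_mem (a : Fin m) :
    D (Q.gen a 0) - Q.coord a 0 (D (Q.gen a 0)) • Q.gen a 0 ∈ Q.filtration 1 := by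
  refine Q.mem_filtration_of_coord hrm (by omega) fun b j hj => ?_
  obtain rfl : j = 0 := by omega
  rw [map_sub, map_smul, Q.coord_gen hrm (by omega) b a 0 (by omega)]
  rcases eq_or_ne b a with rfl | hba
  · simp [show 0 < n by omega]
  · simp [hba, Q.coord_zero_derivation_gen_zero_of_ne hrm hn D hba]

theorem derivation_gen_one_sub_smul_mem (a : Fin m) :
    D (Q.gen a 1) - Q.coord a 1 (D (Q.gen a 1)) • Q.gen a 1 ∈ Q.filtration 2 := by
  refine Q.mem_filtration_of_coord hrm (by omega) fun b j hj => ?_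
  rw [map_sub, map_smul, Q.coord_gen hrm (by omega) b a j (by omega)]
  obtain rfl | rfl : j = 0 ∨ j = 1 := by omega
  · simp [Q.coord_zero_derivation_gen_one hrm hn D a b]
  · rcases eq_or_ne b a with rfl | hba
    · simp [show 1 < n by omega]
    · simp [hba, Q.coord_one_derivation_gen_one_of_ne hrm hn D hba]

theorem exists_derivation_gen_sub_smul_mem_of_lt (a : Fin m) {k : ℕ} (hk : k < n) :
    ∃ c : ℂ, D (Q.gen a k) - c • Q.gen a k ∈ Q.filtration (k + 1) := by
  induction k with
  | zero => exact ⟨_, Q.derivation_gen_zero_sub_smul_mem hrm hn D a⟩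
  | succ k ih =>
    rcases Nat.eq_zero_or_pos k with rfl | hk0
    · exact ⟨_, Q.derivation_gen_one_sub_smul_mem hrm hn D a⟩
    obtain ⟨c, hc⟩ := ih (by omega)
    have h0 := Q.derivation_gen_zero_sub_smul_mem hrm hn D a
    have hrel : ⁅Q.gen a 0, Q.gen a k⁆ = Q.gen a (k + 1) := by
      rw [Q.lie_gen_zero_gen a (by omega), if_pos ⟨hk0, by omega⟩]
    refine ⟨Q.coord a 0 (D (Q.gen a 0)) + c, ?_⟩
    rw [← hrel, D.apply_lie_sub_smul]
    have h0k := Q.lie_mem_filtration_max le_rfl hk0 h0 (Q.gen_mem_filtration a le_rfl (by omega))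
    exact add_mem (Q.filtration_antitone (by omega) h0k) (Q.lie_mem_filtration_succ hrm _ hc)

theorem exists_derivation_gen_top_sub_smul_mem (a : Fin m) :
    ∃ c : ℂ, D (Q.gen a n) - c • Q.gen a n ∈ Q.filtration (n + 1) := by
  obtain ⟨c, hc⟩ :=
    Q.exists_derivation_gen_sub_smul_mem_of_lt hrm hn D a (k := n - 1) (by omega)
  have h1 := Q.derivation_gen_one_sub_smul_mem hrm hn D a
  have hrel : ⁅Q.gen a 1, Q.gen a (n - 1)⁆ = -Q.gen a n := by
    rw [Q.lie_gen_gen_of_pos a le_rfl (by omega) (by omega) (by omega), if_pos (by omega),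
      pow_one, neg_one_smul]
  refine ⟨Q.coord a 1 (D (Q.gen a 1)) + c, ?_⟩
  have h : D (Q.gen a n) - (Q.coord a 1 (D (Q.gen a 1)) + c) • Q.gen a n =
      -(D ⁅Q.gen a 1, Q.gen a (n - 1)⁆ -
        (Q.coord a 1 (D (Q.gen a 1)) + c) • ⁅Q.gen a 1, Q.gen a (n - 1)⁆) := by
    rw [hrel, map_neg]
    module
  rw [h, D.apply_lie_sub_smul]
  have hn1 : n - 1 + 1 = n := by omega
  rw [hn1] at hc
  have h1n := Q.lie_mem_filtration_max (by omega) (by omega) h1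
    (Q.gen_mem_filtration a (s := n - 1) le_rfl (by omega))
  exact neg_mem
    (add_mem (Q.filtration_antitone (by omega) h1n) (Q.lie_mem_filtration_succ hrm _ hc))

theorem isTriangular_derivation :
    Module.End.IsTriangular (fun i : Fin m × Fin (n + 1) => Q.gen i.1 i.2) (fun i => i.2)
      (D : Module.End ℂ N) := by
  rintro ⟨a, k⟩
  show ∃ c : ℂ, D (Q.gen a k) - c • Q.gen a k ∈ Q.filtration (k + 1)
  rcases k.is_le.lt_or_eq with hk | hk
  · exact Q.exists_derivation_gen_sub_smul_mem_of_lt hrm hn D a hk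
  · rw [hk]
    exact Q.exists_derivation_gen_top_sub_smul_mem hrm hn D a

end Derivation

end QuasiQnFiliform

theorem derivation_algebra_isSolvable_general
    (n d m r : ℕ) (hn : n = 2 * d + 1) (hd : 2 ≤ d)
    (hrm : r ≤ m)
    (N : Type*) [LieRing N] [LieAlgebra ℂ N] (Q : QuasiQnFiliform n m r N) :
    LieAlgebra.IsSolvable (LieDerivation ℂ N N) :=
  LieDerivation.isSolvable_of_isTriangular _ (Q.span_range_gen hrm)
    (Q.isTriangular_derivation hrm (by omega))

/-- The derivation algebra of a quasi `Qₙ`-filiform Lie algebra `N = N(Qₙ, m, r)` is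
solvable. -/
theorem derivation_algebra_isSolvable
    (n d m r : ℕ) (hn : n = 2 * d + 1) (hd : 2 ≤ d)
    (hm : 1 ≤ m) (hr : 1 ≤ r) (hrm : r ≤ m)
    (N : Type*) [LieRing N] [LieAlgebra ℂ N] (Q : QuasiQnFiliform n m r N) :
    LieAlgebra.IsSolvable (LieDerivation ℂ N N) :=
  derivation_algebra_isSolvable_general n d m r hn hd hrm N Q
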